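/- arXiv:2604.11053 — 2 statements merged into one kernel-verified Lean document; each statement's English description precedes it below -/
import Mathlib

section
/- (CLUB upper bound) For discrete random variables Z₁ and Z₂ with joint pmf p(z₁,z₂) and marginals p(z₁), p(z₂), the mutual information satisfies I(Z₁;Z₂) ≤ E_{p(z₁,z₂)}[log p(z₂|z₁)] - E_{p(z₁)p(z₂)}[log p(z₂|z₁)], where p(z₂|z₁) = p(z₁,z₂)/p(z₁). -/
open Finset

/-- CLUB upper bound: for discrete `Z₁, Z₂` with (strictly positive)
joint pmf `p` and conditional `p(z₂|z₁) = p(z₁,z₂)/p(z₁)`,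
`I(Z₁;Z₂) ≤ E_{p(z₁,z₂)}[log p(z₂|z₁)] - E_{p(z₁)p(z₂)}[log p(z₂|z₁)]`. -/
theorem club_upper_bound
    {Z₁ Z₂ : Type} [Fintype Z₁] [Fintype Z₂]
    (p : Z₁ → Z₂ → ℝ)
    (hp : ∀ a b, 0 < p a b)
    (hsum : ∑ a, ∑ b, p a b = 1) :
    (∑ a, ∑ b, p a b * Real.log (p a b / ((∑ b', p a b') * (∑ a', p a' b))))
      ≤ (∑ a, ∑ b, p a b * Real.log (p a b / (∑ b', p a b')))
        - (∑ a, ∑ b, (∑ b', p a b') * (∑ a', p a' b) *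
            Real.log (p a b / (∑ b'', p a b''))) := by
  by_cases hZ1 : IsEmpty Z₁
  · simp at hsum
  by_cases hZ2 : IsEmpty Z₂
  · simp at hsum
  rw [not_isEmpty_iff] at hZ1 hZ2
  set q : Z₁ → ℝ := fun a => ∑ b', p a b' with hqdef
  set r : Z₂ → ℝ := fun b => ∑ a', p a' b with hrdef
  have hq : ∀ a, 0 < q a := fun a => Finset.sum_pos (fun b _ => hp a b) univ_nonempty
  have hr : ∀ b, 0 < r b := fun b => Finset.sum_pos (fun a _ => hp a b) univ_nonempty
  have hqsum : ∑ a, q a = 1 := hsum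
  -- Jensen: for each b, ∑ a, q a * log (p a b / q a) ≤ log (r b)
  have key : ∀ b, ∑ a, q a * Real.log (p a b / q a) ≤ Real.log (r b) := by
    intro b
    have := strictConcaveOn_log_Ioi.concaveOn.le_map_sum
      (t := Finset.univ) (w := q) (p := fun a => p a b / q a)
      (fun a _ => (hq a).le) hqsum
      (fun a _ => Set.mem_Ioi.mpr (div_pos (hp a b) (hq a)))
    simp only [smul_eq_mul] at this
    have hconv : ∑ a, q a * (p a b / q a) = r b := by
      apply Finset.sum_congr rfl
      intro a _
      rw [mul_comm, div_mul_cancel₀ _ (hq a).ne']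
    rwa [hconv] at this
  -- expand logs
  have expand : ∀ a b, Real.log (p a b / (q a * r b))
      = Real.log (p a b / q a) - Real.log (r b) := by
    intro a b
    rw [div_mul_eq_div_div, Real.log_div (div_pos (hp a b) (hq a)).ne' (hr b).ne']
  have lhs_eq : (∑ a, ∑ b, p a b * Real.log (p a b / (q a * r b)))
      = (∑ a, ∑ b, p a b * Real.log (p a b / q a))
        - (∑ a, ∑ b, p a b * Real.log (r b)) := by
    rw [← Finset.sum_sub_distrib]
    apply Finset.sum_congr rfl; intro a _
    rw [← Finset.sum_sub_distrib]
    apply Finset.sum_congr rfl; intro b _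
    rw [expand a b]; ring
  rw [lhs_eq]
  have h1 : (∑ a, ∑ b, p a b * Real.log (r b)) = ∑ b, r b * Real.log (r b) := by
    rw [Finset.sum_comm]
    apply Finset.sum_congr rfl; intro b _
    rw [hrdef, Finset.sum_mul]
  have h2 : (∑ a, ∑ b, q a * r b * Real.log (p a b / q a))
      = ∑ b, r b * ∑ a, q a * Real.log (p a b / q a) := by
    rw [Finset.sum_comm]
    apply Finset.sum_congr rfl; intro b _
    rw [Finset.mul_sum]
    apply Finset.sum_congr rfl; intro a _; ring
  have main : (∑ a, ∑ b, q a * r b * Real.log (p a b / q a))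
      ≤ ∑ a, ∑ b, p a b * Real.log (r b) := by
    rw [h1, h2]
    apply Finset.sum_le_sum
    intro b _
    exact mul_le_mul_of_nonneg_left (key b) (hr b).le
  linarith
end

section
/- (Conditional CLUB) For discrete random variables Z₁, Z₂, W with joint pmf p, the conditional mutual information satisfies I(Z₁;Z₂ | W) ≤ E_{p(w)}[ E_{p(z₁,z₂|w)}[log p(z₂|z₁,w)] - E_{p(z₁|w)p(z₂|w)}[log p(z₂|z₁,w)] ]. -/
open Finset

private lemma club_aux {Z₁ Z₂ W : Type} [Fintype Z₁] [Fintype Z₂]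
    (p : Z₁ → Z₂ → W → ℝ) (w : W) (hp : ∀ a b, 0 < p a b w) :
    (∑ a, ∑ b, p a b w *
        Real.log ((p a b w * (∑ a', ∑ b', p a' b' w)) /
          ((∑ b', p a b' w) * (∑ a', p a' b w))))
      ≤ (∑ a, ∑ b, p a b w * Real.log (p a b w / (∑ b', p a b' w)))
        - (∑ a, ∑ b,
            ((∑ b', p a b' w) * (∑ a', p a' b w) / (∑ a', ∑ b', p a' b' w)) *
              Real.log (p a b w / (∑ b', p a b' w))) := by
  rcases isEmpty_or_nonempty Z₁ with h | h
  · simp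
  rcases isEmpty_or_nonempty Z₂ with h2 | h2
  · simp
  have hSpos : 0 < ∑ a', ∑ b', p a' b' w :=
    Finset.sum_pos (fun a _ => Finset.sum_pos (fun b _ => hp a b) univ_nonempty) univ_nonempty
  have hqa : ∀ a, 0 < ∑ b', p a b' w := fun a => Finset.sum_pos (fun b _ => hp a b) univ_nonempty
  have hqb : ∀ b, 0 < ∑ a', p a' b w := fun b => Finset.sum_pos (fun a _ => hp a b) univ_nonempty
  rw [← sub_nonneg]
  have hrw : (∑ a, ∑ b, p a b w * Real.log (p a b w / (∑ b', p a b' w)))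
        - (∑ a, ∑ b,
            ((∑ b', p a b' w) * (∑ a', p a' b w) / (∑ a', ∑ b', p a' b' w)) *
              Real.log (p a b w / (∑ b', p a b' w)))
        - (∑ a, ∑ b, p a b w *
            Real.log ((p a b w * (∑ a', ∑ b', p a' b' w)) /
              ((∑ b', p a b' w) * (∑ a', p a' b w))))
      = (∑ a, ∑ b, ((∑ b', p a b' w) * (∑ a', p a' b w) / (∑ a', ∑ b', p a' b' w)) *
            (Real.log ((∑ a', p a' b w) / (∑ a', ∑ b', p a' b' w))
              - Real.log (p a b w / (∑ b', p a b' w))))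
        + (∑ a, ∑ b, (p a b w - (∑ b', p a b' w) * (∑ a', p a' b w) / (∑ a', ∑ b', p a' b' w)) *
            Real.log ((∑ a', p a' b w) / (∑ a', ∑ b', p a' b' w))) := by
    rw [← Finset.sum_add_distrib, ← Finset.sum_sub_distrib, ← Finset.sum_sub_distrib]
    refine Finset.sum_congr rfl fun a _ => ?_
    rw [← Finset.sum_add_distrib, ← Finset.sum_sub_distrib, ← Finset.sum_sub_distrib]
    refine Finset.sum_congr rfl fun b _ => ?_
    have harg : (p a b w * (∑ a', ∑ b', p a' b' w)) / ((∑ b', p a b' w) * (∑ a', p a' b w))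
        = (p a b w / (∑ b', p a b' w)) / ((∑ a', p a' b w) / (∑ a', ∑ b', p a' b' w)) := by
      field_simp
    rw [harg, Real.log_div (div_pos (hp a b) (hqa a)).ne' (div_pos (hqb b) hSpos).ne']
    ring
  rw [hrw]
  have hzero : (∑ a, ∑ b, (p a b w - (∑ b', p a b' w) * (∑ a', p a' b w) / (∑ a', ∑ b', p a' b' w)) *
      Real.log ((∑ a', p a' b w) / (∑ a', ∑ b', p a' b' w))) = 0 := by
    rw [Finset.sum_comm]
    refine Finset.sum_eq_zero fun b _ => ?_
    rw [← Finset.sum_mul]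
    have : (∑ a, (p a b w - (∑ b', p a b' w) * (∑ a', p a' b w) / (∑ a', ∑ b', p a' b' w))) = 0 := by
      rw [Finset.sum_sub_distrib]
      have h1 : (∑ a, (∑ b', p a b' w) * (∑ a', p a' b w) / (∑ a', ∑ b', p a' b' w))
          = (∑ a, ∑ b', p a b' w) * (∑ a', p a' b w) / (∑ a', ∑ b', p a' b' w) := by
        rw [← Finset.sum_div, ← Finset.sum_mul]
      have h2 : (∑ a, ∑ b', p a b' w) * (∑ a', p a' b w) / (∑ a', ∑ b', p a' b' w)
          = (∑ a', p a' b w) := mul_div_cancel_left₀ _ hSpos.ne'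
      rw [h1, h2, sub_self]
    rw [this, zero_mul]
  rw [hzero, add_zero]
  have hbound : ∀ a ∈ (univ : Finset Z₁), ∀ b ∈ (univ : Finset Z₂),
      (∑ b', p a b' w) * (∑ a', p a' b w) / (∑ a', ∑ b', p a' b' w) - p a b w
      ≤ ((∑ b', p a b' w) * (∑ a', p a' b w) / (∑ a', ∑ b', p a' b' w)) *
          (Real.log ((∑ a', p a' b w) / (∑ a', ∑ b', p a' b' w))
            - Real.log (p a b w / (∑ b', p a b' w))) := by
    intro a _ b _
    set t := (∑ b', p a b' w) * (∑ a', p a' b w) / (∑ a', ∑ b', p a' b' w) with ht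
    have htpos : 0 < t := div_pos (mul_pos (hqa a) (hqb b)) hSpos
    have hx : 0 < (p a b w / (∑ b', p a b' w)) / ((∑ a', p a' b w) / (∑ a', ∑ b', p a' b' w)) :=
      div_pos (div_pos (hp a b) (hqa a)) (div_pos (hqb b) hSpos)
    have hlog := Real.log_le_sub_one_of_pos hx
    rw [Real.log_div (div_pos (hp a b) (hqa a)).ne' (div_pos (hqb b) hSpos).ne'] at hlog
    have h2 : Real.log ((∑ a', p a' b w) / (∑ a', ∑ b', p a' b' w))
        - Real.log (p a b w / (∑ b', p a b' w))
        ≥ 1 - (p a b w / (∑ b', p a b' w)) / ((∑ a', p a' b w) / (∑ a', ∑ b', p a' b' w)) := by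
      linarith
    have h3 : t * (1 - (p a b w / (∑ b', p a b' w)) / ((∑ a', p a' b w) / (∑ a', ∑ b', p a' b' w)))
        = t - p a b w := by
      have h4 := (hqa a).ne'
      have h5 := (hqb b).ne'
      have h6 := hSpos.ne'
      rw [ht]
      field_simp
    calc t - p a b w
        = t * (1 - (p a b w / (∑ b', p a b' w)) / ((∑ a', p a' b w) / (∑ a', ∑ b', p a' b' w))) :=
          h3.symm
      _ ≤ t * (Real.log ((∑ a', p a' b w) / (∑ a', ∑ b', p a' b' w))
            - Real.log (p a b w / (∑ b', p a b' w))) := by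
          exact mul_le_mul_of_nonneg_left h2 htpos.le
  have hsum0 : (∑ a, ∑ b, ((∑ b', p a b' w) * (∑ a', p a' b w) / (∑ a', ∑ b', p a' b' w) - p a b w)) = 0 := by
    refine Finset.sum_eq_zero fun a _ => ?_
    rw [Finset.sum_sub_distrib]
    have h1 : (∑ b, (∑ b', p a b' w) * (∑ a', p a' b w) / (∑ a', ∑ b', p a' b' w))
        = (∑ b', p a b' w) * (∑ b, ∑ a', p a' b w) / (∑ a', ∑ b', p a' b' w) := by
      rw [← Finset.sum_div, ← Finset.mul_sum]
    have h2 : (∑ b, ∑ a', p a' b w) = (∑ a', ∑ b', p a' b' w) := Finset.sum_comm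
    rw [h1, h2, mul_div_assoc, div_self hSpos.ne', mul_one, sub_self]
  calc (0:ℝ) = ∑ a, ∑ b, ((∑ b', p a b' w) * (∑ a', p a' b w) / (∑ a', ∑ b', p a' b' w) - p a b w) :=
        hsum0.symm
    _ ≤ _ := Finset.sum_le_sum fun a ha => Finset.sum_le_sum fun b hb => hbound a ha b hb

/-- Conditional CLUB: for discrete `Z₁, Z₂, W` with strictly positive
joint pmf `p(z₁,z₂,w)`,
`I(Z₁;Z₂|W) ≤ E_{p(w)}[E_{p(z₁,z₂|w)}[log p(z₂|z₁,w)] - E_{p(z₁|w)p(z₂|w)}[log p(z₂|z₁,w)]]`,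
where `p(z₂|z₁,w) = p(z₁,z₂,w)/p(z₁,w)`. -/
theorem conditional_club_upper_bound
    {Z₁ Z₂ W : Type} [Fintype Z₁] [Fintype Z₂] [Fintype W]
    (p : Z₁ → Z₂ → W → ℝ)
    (hp : ∀ a b w, 0 < p a b w)
    (hsum : ∑ a, ∑ b, ∑ w, p a b w = 1) :
    (∑ w, ∑ a, ∑ b, p a b w *
        Real.log ((p a b w * (∑ a', ∑ b', p a' b' w)) /
          ((∑ b', p a b' w) * (∑ a', p a' b w))))
      ≤ (∑ w, ∑ a, ∑ b, p a b w * Real.log (p a b w / (∑ b', p a b' w)))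
        - (∑ w, ∑ a, ∑ b,
            ((∑ b', p a b' w) * (∑ a', p a' b w) / (∑ a', ∑ b', p a' b' w)) *
              Real.log (p a b w / (∑ b', p a b' w))) := by
  rw [← Finset.sum_sub_distrib]
  exact Finset.sum_le_sum fun w _ => club_aux p w (fun a b => hp a b w)
end
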